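/- arXiv:1710.04732 — 7 statements merged into one kernel-verified Lean document; each statement's English description precedes it below -/
import Mathlib

section
/- Let M ≥ 1 and set y_0 = 0. Then the infimum over all y_1,…,y_{M-1} ≥ 0 of the sum ∑_{i=1}^M e^{-y_{i-1}} y_i tends to infinity as y_M → ∞. Equivalently: for every C > 0 there exists L > 0 such that for all y_1,…,y_{M-1} ≥ 0 and all y_M ≥ L one has ∑_{i=1}^M e^{-y_{i-1}} y_i ≥ C. -/
/-!
Induction on `M`. Given a threshold `L` that works for `M`, the threshold `C e^L` works for
`M + 1`: if `y M ≥ L` the first `M` terms already sum to at least `C`, and otherwise the last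
term is `e^{-y M} y (M+1) ≥ e^{-L} C e^L = C`. All other terms are nonnegative.
-/

open Finset Real

noncomputable def threshold (C : ℝ) : ℕ → ℝ
  | 0 => C
  | n + 1 => C * exp (threshold C n)

lemma threshold_pos {C : ℝ} (hC : 0 < C) (n : ℕ) : 0 < threshold C n := by
  cases n <;> simp only [threshold] <;> positivity

lemma threshold_nonneg {C : ℝ} (hC : 0 ≤ C) (n : ℕ) : 0 ≤ threshold C n := by
  cases n <;> simp only [threshold] <;> positivity

lemma le_exp_neg_mul_of_lt {a b C L : ℝ} (ha : a < L) (hC : 0 ≤ C) (hb : C * exp L ≤ b) :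
    C ≤ exp (-a) * b :=
  calc C = exp (-L) * (C * exp L) := by
        rw [mul_left_comm, ← exp_add, neg_add_cancel, exp_zero, mul_one]
    _ ≤ exp (-a) * b := by gcongr

lemma sum_exp_neg_mul_nonneg {y : ℕ → ℝ} {n : ℕ} (hy : ∀ i, 1 ≤ i → i ≤ n → 0 ≤ y i) :
    0 ≤ ∑ i ∈ Icc 1 n, exp (-y (i - 1)) * y i :=
  sum_nonneg fun i hi => mul_nonneg (exp_nonneg _) (hy i (mem_Icc.1 hi).1 (mem_Icc.1 hi).2)

lemma le_sum_exp_neg_mul_of_threshold_le {C : ℝ} (hC : 0 ≤ C) :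
    ∀ (n : ℕ) (y : ℕ → ℝ), y 0 = 0 → (∀ i, 1 ≤ i → i ≤ n → 0 ≤ y i) →
      threshold C n ≤ y (n + 1) → C ≤ ∑ i ∈ Icc 1 (n + 1), exp (-y (i - 1)) * y i
  | 0, y, hy0, _, hy1 => by simpa [threshold, hy0] using hy1
  | n + 1, y, hy0, hy, hyn => by
    rw [sum_Icc_succ_top (by omega), Nat.add_sub_cancel]
    have hlast : 0 ≤ y (n + 2) := (threshold_nonneg hC _).trans hyn
    by_cases hprev : threshold C n ≤ y (n + 1)
    · have hhead := le_sum_exp_neg_mul_of_threshold_le hC n y hy0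
        (fun i hi hin => hy i hi (by omega)) hprev
      have := mul_nonneg (exp_nonneg (-y (n + 1))) hlast
      linarith
    · have hhead := sum_exp_neg_mul_nonneg hy
      have := le_exp_neg_mul_of_lt (not_le.1 hprev) hC hyn
      linarith

/-- For `M ≥ 1`, with `y 0 = 0`, the infimum over `y 1, …, y (M-1) ≥ 0` of
`∑_{i=1}^M e^{-y (i-1)} * y i` tends to infinity as `y M → ∞`:
for every `C > 0` there is `L > 0` such that the sum is `≥ C` whenever
`y 1, …, y (M-1) ≥ 0` and `y M ≥ L`. -/
theorem stmt_0 (M : ℕ) (hM : 1 ≤ M) :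
    ∀ C > (0 : ℝ), ∃ L > (0 : ℝ), ∀ y : ℕ → ℝ, y 0 = 0 →
      (∀ i, 1 ≤ i → i ≤ M - 1 → 0 ≤ y i) → L ≤ y M →
      C ≤ ∑ i ∈ Finset.Icc 1 M, Real.exp (-(y (i - 1))) * y i := by
  obtain ⟨n, rfl⟩ := Nat.exists_eq_add_of_le' hM
  intro C hC
  exact ⟨threshold C n, threshold_pos hC n,
    fun y hy0 hy hyn => le_sum_exp_neg_mul_of_threshold_le hC.le n y hy0 hy hyn⟩
end

section
/- Let G = (C, R) be a finite strongly connected directed graph on m ≥ 2 vertices with edge labels κ : R → ℝ₊, and let A_κ ∈ ℝ^{m×m} be its Laplacian, defined by (A_κ)_{ji} = κ_{ij} for (i,j) ∈ R with i ≠ j and diagonal entries (A_κ)_{ii} = -∑_j κ_{ij}. Then there exists L > 0 such that for all z ∈ ℝ^m with ∑_{i=1}^m z_i = 0 and max(z) ≥ L, one has z^⊤ A_κ e^z < 0, where e^z is the coordinatewise exponential. -/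
/-!
Let `M = max z` and `K = ∑ κ`. Since `e^x (y - x) ≤ e^y ≤ e^M`, every edge contributes at most
`κ_e e^M`, so it suffices to find one edge `u → v` whose term is `≤ -K e^M`. Such an edge exists
once the values of `z` have a gap: a level `β` with `z v ≤ β - C e^(M - β)` for all `z v < β`,
where `C = ∑_e K / κ_e`; strong connectivity gives an edge from `{z ≥ β}` (which contains the
maximiser) to `{z < β}` (which contains a negative coordinate). Walking down the values of `z`
from `M`, a gap must occur within `m` steps, and the thresholds `t_{k+1} = t_k + C e^(t_k)` bound
how far below `M` it can be. Hence `L = t_m + 1` keeps `β > 0`.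
-/

open Finset Real

noncomputable def gapBound (g : ℝ → ℝ) (k : ℕ) : ℝ := (fun x => x + g x)^[k] 0

lemma gapBound_zero (g : ℝ → ℝ) : gapBound g 0 = 0 := rfl

lemma gapBound_succ (g : ℝ → ℝ) (k : ℕ) :
    gapBound g (k + 1) = gapBound g k + g (gapBound g k) :=
  Function.iterate_succ_apply' _ _ _

lemma gapBound_monotone {g : ℝ → ℝ} (hg : ∀ x, 0 ≤ g x) : Monotone (gapBound g) :=
  monotone_nat_of_le_succ fun k => by rw [gapBound_succ]; linarith [hg (gapBound g k)]

lemma gapBound_nonneg {g : ℝ → ℝ} (hg : ∀ x, 0 ≤ g x) (k : ℕ) : 0 ≤ gapBound g k :=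
  gapBound_zero g ▸ gapBound_monotone hg (Nat.zero_le k)

theorem exists_gap {ι : Type*} [Fintype ι] {g : ℝ → ℝ} (hg : Monotone g) (hg0 : ∀ x, 0 ≤ g x)
    (z : ι → ℝ) (M : ℝ) (b : ι) (k : ℕ) (hb : M - z b ≤ gapBound g k) :
    ∃ a, M - z a ≤ gapBound g (k + #{i | z i < z b}) ∧
      ∀ j, z j < z a → z j ≤ z a - g (M - z a) := by
  induction hN : #{i | z i < z b} using Nat.strong_induction_on generalizing b k with
  | _ N ih =>
  by_cases hgap : ∀ j, z j < z b → z j ≤ z b - g (M - z b)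
  · exact ⟨b, hb.trans (gapBound_monotone hg0 (by omega)), hgap⟩
  push Not at hgap
  obtain ⟨j, hjb, hj⟩ := hgap
  have hcard : #{i | z i < z j} < N := by
    rw [← hN]
    refine card_lt_card ⟨fun i hi => ?_, not_subset.2 ⟨j, by simp [hjb], by simp⟩⟩
    simp only [mem_filter, mem_univ, true_and] at hi ⊢
    exact hi.trans hjb
  have hjk : M - z j ≤ gapBound g (k + 1) := by
    rw [gapBound_succ]; linarith [hg hb]
  obtain ⟨a, ha, hgap⟩ := ih _ hcard j (k + 1) hjk rfl
  exact ⟨a, ha.trans (gapBound_monotone hg0 (by omega)), hgap⟩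

theorem Relation.ReflTransGen.exists_edge_leaving {α : Type*} {r : α → α → Prop} {p : α → Prop}
    {i j : α} (h : Relation.ReflTransGen r i j) (hi : p i) (hj : ¬ p j) :
    ∃ u v, r u v ∧ p u ∧ ¬ p v := by
  induction h with
  | refl => exact absurd hi hj
  | @tail u v _ huv ih =>
    by_cases hu : p u
    · exact ⟨u, v, huv, hu, hj⟩
    · exact ih hu

lemma exp_mul_mul_sub_le {c x y M : ℝ} (hc : 0 ≤ c) (hy : y ≤ M) :
    exp x * c * (y - x) ≤ c * exp M := by
  have h : exp x * (y - x) ≤ exp y := by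
    calc exp x * (y - x) ≤ exp x * exp (y - x) := by
          gcongr; linarith [add_one_le_exp (y - x)]
      _ = exp y := by rw [← exp_add]; ring_nf
  calc exp x * c * (y - x) = c * (exp x * (y - x)) := by ring
    _ ≤ c * exp M := by gcongr; exact h.trans (exp_le_exp.2 hy)

lemma exp_mul_mul_sub_le_of_gap {c x y β D : ℝ} (hc : 0 ≤ c) (hD : 0 ≤ D)
    (hx : β ≤ x) (hy : y ≤ β - D) :
    exp x * c * (y - x) ≤ -(c * D * exp β) := by
  have hcd : c * (y - x) ≤ -(c * D) := by nlinarith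
  have hexp : exp β ≤ exp x := exp_le_exp.2 hx
  nlinarith [mul_le_mul_of_nonneg_left hcd (exp_pos x).le, mul_nonneg hc hD]

theorem sum_exp_mul_mul_sub_neg {ι : Type*} [DecidableEq ι] {R : Finset (ι × ι)} {κ : ι × ι → ℝ}
    (hκ : ∀ e ∈ R, 0 < κ e) {z : ι → ℝ} {M : ℝ} (hM : ∀ i, z i ≤ M) {e : ι × ι} (he : e ∈ R)
    (hsteep : exp (z e.1) * κ e * (z e.2 - z e.1) ≤ -((∑ e ∈ R, κ e) * exp M)) :
    ∑ e ∈ R, exp (z e.1) * κ e * (z e.2 - z e.1) < 0 := by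
  have hrest : ∑ e' ∈ R.erase e, exp (z e'.1) * κ e' * (z e'.2 - z e'.1)
      ≤ (∑ e' ∈ R.erase e, κ e') * exp M := by
    rw [sum_mul]
    exact sum_le_sum fun e' he' => exp_mul_mul_sub_le (hκ e' (mem_of_mem_erase he')).le (hM _)
  rw [← sum_erase_add R _ he]
  rw [← sum_erase_add R _ he, add_mul] at hsteep
  nlinarith [mul_pos (hκ e he) (exp_pos M)]

theorem stmt_7_general (m : ℕ) (R : Finset (Fin m × Fin m))
    (hconn : ∀ i j : Fin m, Relation.ReflTransGen (fun a b => (a, b) ∈ R) i j)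
    (κ : Fin m × Fin m → ℝ) (hκ : ∀ e ∈ R, 0 < κ e) :
    ∃ L > (0 : ℝ), ∀ z : Fin m → ℝ, (∑ i, z i = 0) → (∃ k, L ≤ z k) →
      ∑ e ∈ R, Real.exp (z e.1) * κ e * (z e.2 - z e.1) < 0 := by
  set K := ∑ e ∈ R, κ e
  set C := ∑ e ∈ R, K / κ e
  have hK : 0 ≤ K := sum_nonneg fun e he => (hκ e he).le
  have hC : 0 ≤ C := sum_nonneg fun e he => div_nonneg hK (hκ e he).le
  have hKC : ∀ e ∈ R, K ≤ κ e * C := fun e he => by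
    have := single_le_sum (fun e he => div_nonneg hK (hκ e he).le) he
    rwa [div_le_iff₀' (hκ e he)] at this
  have hg : Monotone fun T => C * exp T := fun _ _ h =>
    mul_le_mul_of_nonneg_left (exp_le_exp.2 h) hC
  have hg0 : ∀ T, 0 ≤ C * exp T := fun T => by positivity
  refine ⟨gapBound _ m + 1, by linarith [gapBound_nonneg hg0 m], ?_⟩
  rintro z hsum ⟨k, hk⟩
  obtain ⟨i₀, -, hi₀⟩ := exists_max_image univ z ⟨k, mem_univ k⟩
  obtain ⟨a, ha, hgap⟩ := exists_gap hg hg0 z (z i₀) i₀ 0 (by simp [gapBound_zero])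
  have hβ : 0 < z a := by
    have hcard : 0 + #{i | z i < z i₀} ≤ m := by
      simpa using (card_le_univ _).trans_eq (Fintype.card_fin m)
    have := gapBound_monotone hg0 hcard
    linarith [hi₀ k (mem_univ k)]
  obtain ⟨j₀, hj₀⟩ : ∃ j, z j < 0 := by
    by_contra! h
    have := (sum_eq_zero_iff_of_nonneg fun i _ => h i).1 hsum a (mem_univ a)
    linarith
  obtain ⟨u, v, huv, hu, hv⟩ := (hconn i₀ j₀).exists_edge_leaving (p := fun i => z a ≤ z i)
    (by linarith [hi₀ a (mem_univ a)]) (by simp only [not_le]; linarith)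
  refine sum_exp_mul_mul_sub_neg hκ (fun i => hi₀ i (mem_univ i)) huv ?_
  calc exp (z u) * κ (u, v) * (z v - z u)
      ≤ -(κ (u, v) * (C * exp (z i₀ - z a)) * exp (z a)) :=
        exp_mul_mul_sub_le_of_gap (hκ _ huv).le (hg0 _) hu (hgap v (not_le.1 hv))
    _ = -(κ (u, v) * C * exp (z i₀)) := by rw [exp_sub]; field_simp
    _ ≤ -(K * exp (z i₀)) := by gcongr; exact hKC _ huv

/-- Let `(C, R)` be a finite strongly connected digraph on `m ≥ 2` vertices without
self-loops, with positive edge labels `κ`. Then there is `L > 0` such that for every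
`z ∈ ℝ^m` with `∑ i, z i = 0` and `max(z) ≥ L` one has
`z^⊤ A_κ e^z = ∑_{(i,j)∈R} e^{z_i} κ_{ij} (z_j − z_i) < 0`. -/
theorem stmt_7 (m : ℕ) (hm : 2 ≤ m) (R : Finset (Fin m × Fin m))
    (hloop : ∀ e ∈ R, e.1 ≠ e.2)
    (hconn : ∀ i j : Fin m, Relation.ReflTransGen (fun a b => (a, b) ∈ R) i j)
    (κ : Fin m × Fin m → ℝ) (hκ : ∀ e ∈ R, 0 < κ e) :
    ∃ L > (0 : ℝ), ∀ z : Fin m → ℝ, (∑ i, z i = 0) → (∃ k, L ≤ z k) →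
      ∑ e ∈ R, Real.exp (z e.1) * κ e * (z e.2 - z e.1) < 0 :=
  stmt_7_general m R hconn κ hκ
end

section
/- Let G = (C, R) be a finite strongly connected directed graph on m vertices with positive edge labels κ and Laplacian A_κ. Then there exists R₀ > 0 such that z^⊤ A_κ e^z < 0 for all z ∈ ℝ^m with ∑_{i=1}^m z_i = 0 and |z| ≥ R₀. -/
/-!
Let `M = max z` and call `M - z i` the depth of vertex `i`. Since `e^a (b - a) < e^b`, every edge
contributes less than `κ e * e^M`. Take levels `0 = T 0 ≤ T 1 ≤ ⋯` with
`T (k + 1) = T k + C e^{T k}`; by pigeonhole one of the `m + 1` layers `(T j, T (j + 1)]` contains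
no depth. When `∑ z = 0` and `‖z‖` is large some vertex is deeper than `T m`, so strong
connectivity yields an edge `p → q` from depth `≤ T j` to depth `> T (j + 1)`. Its term is below
`-C κ(p, q) e^M`, which outweighs all the other terms once `C κ e ≥ ∑ κ` for every edge.
-/

open Finset Real

lemma Relation.ReflTransGen.exists_rel_not {α : Type*} {r : α → α → Prop} {S : α → Prop}
    {a b : α} (h : Relation.ReflTransGen r a b) (ha : S a) (hb : ¬ S b) :
    ∃ p q, r p q ∧ S p ∧ ¬ S q := by
  induction h with
  | refl => exact absurd ha hb
  | @tail c d _ hcd ih =>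
    by_cases hc : S c
    · exact ⟨c, d, hcd, hc, hb⟩
    · exact ih hc

lemma exists_forall_notMem_Ioc {ι α : Type*} [Fintype ι] [Preorder α] (w : ι → α)
    {T : ℕ → α} (hT : Monotone T) :
    ∃ j ≤ Fintype.card ι, ∀ i, w i ∉ Set.Ioc (T j) (T (j + 1)) := by
  by_contra! h
  choose f hf using fun j : Fin (Fintype.card ι + 1) => h j (Nat.lt_succ_iff.1 j.2)
  obtain ⟨j, k, hjk, hf_eq⟩ := Fintype.exists_ne_map_eq_of_card_lt f (by simp)
  exact Set.disjoint_left.1 (hT.pairwise_disjoint_on_Ioc_succ (Fin.val_ne_of_ne hjk)) (hf j)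
    (hf_eq ▸ hf k)

lemma exp_mul_sub_lt_exp (a b : ℝ) : exp a * (b - a) < exp b := by
  calc exp a * (b - a) < exp a * exp (b - a) :=
        mul_lt_mul_of_pos_left ((lt_add_one _).trans_le (add_one_le_exp _)) (exp_pos a)
    _ = exp b := by rw [← exp_add, add_sub_cancel]

lemma sum_exp_mul_sub_neg {ι : Type*} [DecidableEq ι] {R : Finset (ι × ι)} {κ : ι × ι → ℝ}
    (hκ : ∀ e ∈ R, 0 < κ e) {z : ι → ℝ} {M : ℝ} (hM : ∀ i, z i ≤ M) {p q : ι} (hpq : (p, q) ∈ R)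
    (hgap : (∑ e ∈ R, κ e) * exp M ≤ κ (p, q) * exp (z p) * (z p - z q)) :
    ∑ e ∈ R, exp (z e.1) * κ e * (z e.2 - z e.1) < 0 := by
  have hrest : ∑ e ∈ R.erase (p, q), exp (z e.1) * κ e * (z e.2 - z e.1)
      ≤ (∑ e ∈ R, κ e - κ (p, q)) * exp M := by
    rw [← sum_erase_eq_sub hpq, sum_mul]
    refine sum_le_sum fun e he => ?_
    calc exp (z e.1) * κ e * (z e.2 - z e.1) = κ e * (exp (z e.1) * (z e.2 - z e.1)) := by ring
      _ ≤ κ e * exp M := mul_le_mul_of_nonneg_left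
          ((exp_mul_sub_lt_exp _ _).le.trans (exp_le_exp.2 (hM _))) (hκ e (mem_of_mem_erase he)).le
  rw [← add_sum_erase R _ hpq]
  nlinarith [mul_pos (hκ _ hpq) (exp_pos M)]

lemma sum_exp_mul_sub_neg_of_gap {ι : Type*} [DecidableEq ι] {R : Finset (ι × ι)}
    {κ : ι × ι → ℝ} (hκ : ∀ e ∈ R, 0 < κ e) {C : ℝ} (hC : ∀ e ∈ R, ∑ f ∈ R, κ f ≤ C * κ e)
    {z : ι → ℝ} {M t : ℝ} (hM : ∀ i, z i ≤ M) {p q : ι} (hpq : (p, q) ∈ R)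
    (hp : M - z p ≤ t) (hq : t + C * exp t < M - z q) :
    ∑ e ∈ R, exp (z e.1) * κ e * (z e.2 - z e.1) < 0 := by
  have hC0 : 0 ≤ C := by
    nlinarith [(single_le_sum (fun e he => (hκ e he).le) hpq).trans (hC _ hpq), hκ _ hpq]
  refine sum_exp_mul_sub_neg hκ hM hpq ?_
  calc (∑ e ∈ R, κ e) * exp M ≤ C * κ (p, q) * exp M :=
        mul_le_mul_of_nonneg_right (hC _ hpq) (exp_pos _).le
    _ = κ (p, q) * exp (M - t) * (C * exp t) := by rw [exp_sub]; field_simp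
    _ ≤ κ (p, q) * exp (z p) * (z p - z q) :=
        mul_le_mul (mul_le_mul_of_nonneg_left (exp_le_exp.2 (by linarith)) (hκ _ hpq).le)
          (by linarith) (by positivity) (mul_pos (hκ _ hpq) (exp_pos _)).le

lemma abs_le_sub_of_sum_eq_zero {ι : Type*} [Fintype ι] [Nonempty ι] {z : ι → ℝ}
    (hz : ∑ i, z i = 0) {top bot : ι} (htop : ∀ i, z i ≤ z top) (hbot : ∀ i, z bot ≤ z i)
    (i : ι) : |z i| ≤ z top - z bot := by
  obtain ⟨j, -, hj⟩ := exists_le_of_sum_le univ_nonempty (f := 0) (g := z) (by simp [hz])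
  obtain ⟨k, -, hk⟩ := exists_le_of_sum_le univ_nonempty (f := z) (g := 0) (by simp [hz])
  simp only [Pi.zero_apply] at hj hk
  exact abs_le.2 ⟨by linarith [htop j, hbot i], by linarith [hbot k, htop i]⟩

lemma EuclideanSpace.norm_le_sqrt_card_mul {ι : Type*} [Fintype ι] (z : EuclideanSpace ℝ ι)
    {r : ℝ} (hr : ∀ i, |z i| ≤ r) : ‖z‖ ≤ √(Fintype.card ι) * r := by
  obtain hι | ⟨⟨i⟩⟩ := isEmpty_or_nonempty ι
  · simp [EuclideanSpace.norm_eq]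
  have hr0 : 0 ≤ r := (abs_nonneg _).trans (hr i)
  rw [EuclideanSpace.norm_eq, ← sqrt_sq hr0, ← sqrt_mul (Nat.cast_nonneg _)]
  refine sqrt_le_sqrt ?_
  calc ∑ i, ‖z i‖ ^ 2 ≤ ∑ _i : ι, r ^ 2 := sum_le_sum fun i _ => by
        rw [norm_eq_abs]; exact pow_le_pow_left₀ (abs_nonneg _) (hr i) 2
    _ = _ := by simp

lemma EuclideanSpace.exists_norm_le_sqrt_card_mul_sub {ι : Type*} [Fintype ι] [Nonempty ι]
    {z : EuclideanSpace ℝ ι} (hz : ∑ i, z i = 0) {top : ι} (htop : ∀ i, z i ≤ z top) :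
    ∃ bot, ‖z‖ ≤ √(Fintype.card ι) * (z top - z bot) := by
  obtain ⟨bot, -, hbot⟩ := exists_min_image univ z univ_nonempty
  exact ⟨bot, norm_le_sqrt_card_mul z
    (abs_le_sub_of_sum_eq_zero hz htop fun i => hbot i (mem_univ i))⟩

lemma exists_nonneg_forall_sum_le_mul {α : Type*} {s : Finset α} {f : α → ℝ}
    (hf : ∀ a ∈ s, 0 < f a) : ∃ C, 0 ≤ C ∧ ∀ a ∈ s, ∑ b ∈ s, f b ≤ C * f a := by
  have hsum : 0 ≤ ∑ b ∈ s, f b := sum_nonneg fun b hb => (hf b hb).le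
  have hterm : ∀ a ∈ s, 0 ≤ (∑ b ∈ s, f b) / f a := fun a ha => div_nonneg hsum (hf a ha).le
  refine ⟨∑ a ∈ s, (∑ b ∈ s, f b) / f a, sum_nonneg hterm, fun a ha => ?_⟩
  rw [← div_le_iff₀ (hf a ha)]
  exact single_le_sum hterm ha

noncomputable def gapSeq (C : ℝ) : ℕ → ℝ
  | 0 => 0
  | k + 1 => gapSeq C k + C * exp (gapSeq C k)

lemma gapSeq_monotone {C : ℝ} (hC : 0 ≤ C) : Monotone (gapSeq C) :=
  monotone_nat_of_le_succ fun k => le_add_of_nonneg_right (by positivity)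

lemma gapSeq_nonneg {C : ℝ} (hC : 0 ≤ C) (k : ℕ) : 0 ≤ gapSeq C k :=
  gapSeq_monotone hC k.zero_le

theorem stmt_8_general (m : ℕ) (hm : 2 ≤ m) (R : Finset (Fin m × Fin m))
    (hconn : ∀ i j : Fin m, Relation.ReflTransGen (fun a b => (a, b) ∈ R) i j)
    (κ : Fin m × Fin m → ℝ) (hκ : ∀ e ∈ R, 0 < κ e) :
    ∃ R₀ > (0 : ℝ), ∀ z : EuclideanSpace ℝ (Fin m), (∑ i, z i = 0) → R₀ ≤ ‖z‖ →
      ∑ e ∈ R, Real.exp (z e.1) * κ e * (z e.2 - z e.1) < 0 := by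
  have : Nonempty (Fin m) := ⟨⟨0, by omega⟩⟩
  obtain ⟨C, hC, hKC⟩ := exists_nonneg_forall_sum_le_mul hκ
  set T := gapSeq C
  have hsqrt : 0 < √(m : ℝ) := sqrt_pos.2 (by positivity)
  refine ⟨√m * (T m + 1), mul_pos hsqrt (by linarith [gapSeq_nonneg hC m]), fun z hz hR₀ => ?_⟩
  obtain ⟨top, -, htop⟩ := exists_max_image univ z univ_nonempty
  replace htop : ∀ i, z i ≤ z top := fun i => htop i (mem_univ i)
  obtain ⟨bot, hbot⟩ := EuclideanSpace.exists_norm_le_sqrt_card_mul_sub hz htop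
  rw [Fintype.card_fin] at hbot
  have hdepth : T m + 1 ≤ z top - z bot := le_of_mul_le_mul_left (hR₀.trans hbot) hsqrt
  obtain ⟨j, hjm, hj⟩ := exists_forall_notMem_Ioc (fun i => z top - z i) (gapSeq_monotone hC)
  rw [Fintype.card_fin] at hjm
  obtain ⟨p, q, hpq, hp, hq⟩ := (hconn top bot).exists_rel_not (S := fun i => z top - z i ≤ T j)
    (by simpa using gapSeq_nonneg hC j) (by linarith [gapSeq_monotone hC hjm])
  have hq' : T j + C * exp (T j) < z top - z q :=
    not_le.1 fun h => hj q ⟨not_le.1 hq, h⟩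
  exact sum_exp_mul_sub_neg_of_gap hκ hKC htop hpq hp hq'

/-- Let `(C, R)` be a finite strongly connected digraph on `m ≥ 2` vertices without
self-loops, with positive edge labels `κ`. Then there is `R₀ > 0` such that for every
`z ∈ ℝ^m` with `∑ i, z i = 0` and Euclidean norm `|z| ≥ R₀` one has
`z^⊤ A_κ e^z = ∑_{(i,j)∈R} e^{z_i} κ_{ij} (z_j − z_i) < 0`. -/
theorem stmt_8 (m : ℕ) (hm : 2 ≤ m) (R : Finset (Fin m × Fin m))
    (hloop : ∀ e ∈ R, e.1 ≠ e.2)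
    (hconn : ∀ i j : Fin m, Relation.ReflTransGen (fun a b => (a, b) ∈ R) i j)
    (κ : Fin m × Fin m → ℝ) (hκ : ∀ e ∈ R, 0 < κ e) :
    ∃ R₀ > (0 : ℝ), ∀ z : EuclideanSpace ℝ (Fin m), (∑ i, z i = 0) → R₀ ≤ ‖z‖ →
      ∑ e ∈ R, Real.exp (z e.1) * κ e * (z e.2 - z e.1) < 0 :=
  stmt_8_general m hm R hconn κ hκ
end

section
/- Let (C, R) be a finite strongly connected directed graph on m ≥ 2 vertices and let D > 0. Then there exists L > 0, depending only on the graph and D, such that for every edge-labelling κ : R → ℝ₊ satisfying max(κ)/min(κ) ≤ D and for every z ∈ ℝ^m with ∑ z_i = 0 and max(z) ≥ L, one has z^⊤ A_κ e^z < 0. -/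
/-!
Let `M = max z`, attained at `i₀`. Each term of the sum is at most `κ_e e^{z_j} ≤ D κ_g e^M`
for any edge `g`, so if some edge `g = (i, j)` is steep, `e^{z_i} (z_i - z_j) > |R| D e^M`,
its term alone outweighs all the others and the sum is negative. Otherwise every edge leaving
a vertex with `z_i ≥ M - B` lands on a vertex with `z_j ≥ M - (B + |R| D e^B)`. Iterating this
from `B_0 = 0` along paths out of `i₀`, every coordinate is at least `M - B_{m-1}`, which is
incompatible with `∑ z = 0` once `M > B_{m-1}`; the bound `B_{m-1}` involves only `|R|`, `D`, `m`.
-/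

open Finset Relation

theorem Relation.ReflTransGen.exists_rel_mem_notMem {α : Type*} {r : α → α → Prop} {i j : α}
    (h : ReflTransGen r i j) {S : Set α} (hi : i ∈ S) (hj : j ∉ S) :
    ∃ a ∈ S, ∃ b ∉ S, r a b := by
  induction h with
  | refl => exact absurd hi hj
  | @tail b c _ hbc ih =>
    by_cases hb : b ∈ S
    · exact ⟨b, hb, c, hj, hbc⟩
    · exact ih hb

theorem Finset.eq_univ_of_rel_mem_succ {α : Type*} [Fintype α] {r : α → α → Prop}
    (hr : ∀ i j, ReflTransGen r i j) {S : ℕ → Finset α} (hmono : Monotone S)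
    (h0 : (S 0).Nonempty) (hstep : ∀ s a b, r a b → a ∈ S s → b ∈ S (s + 1)) :
    S (Fintype.card α - 1) = univ := by
  have hgrow : ∀ s, S s = univ ∨ s + 1 ≤ #(S s) := by
    intro s
    induction s with
    | zero => exact Or.inr h0.card_pos
    | succ s ih =>
      by_cases hs : S s = univ
      · exact Or.inl (univ_subset_iff.mp (hs ▸ hmono s.le_succ))
      · obtain ⟨j, hj⟩ : ∃ j, j ∉ S s := by simpa [eq_univ_iff_forall] using hs
        have hcard := ih.resolve_left hs
        obtain ⟨i, hi⟩ : (S s).Nonempty := card_pos.mp (by omega)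
        obtain ⟨a, ha, b, hb, hab⟩ := (hr i j).exists_rel_mem_notMem (S := ↑(S s)) hi hj
        have hlt : S s ⊂ S (s + 1) :=
          (ssubset_iff_of_subset (hmono s.le_succ)).mpr ⟨b, hstep s a b hab ha, hb⟩
        exact Or.inr (by have := card_lt_card hlt; omega)
  have hα : 0 < Fintype.card α := Fintype.card_pos_iff.mpr ⟨h0.choose⟩
  rcases hgrow (Fintype.card α - 1) with h | h
  · exact h
  · exact eq_univ_of_card _ (le_antisymm (card_le_univ _) (by omega))

theorem le_of_rel_propagate {α : Type*} [Fintype α] {r : α → α → Prop}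
    (hr : ∀ i j, ReflTransGen r i j) {z : α → ℝ} {t : ℕ → ℝ} {i₀ : α} (ht : Antitone t)
    (h0 : t 0 ≤ z i₀) (hstep : ∀ s a b, r a b → t s ≤ z a → t (s + 1) ≤ z b) (i : α) :
    t (Fintype.card α - 1) ≤ z i := by
  classical
  have hcover := eq_univ_of_rel_mem_succ hr (S := fun s => univ.filter fun i => t s ≤ z i)
    (fun s s' hss' i hi => by
      simp only [mem_filter, mem_univ, true_and] at hi ⊢
      exact (ht hss').trans hi)
    ⟨i₀, by simpa using h0⟩
    (fun s a b hab ha => by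
      simp only [mem_filter, mem_univ, true_and] at ha ⊢
      exact hstep s a b hab ha)
  have hi : i ∈ univ.filter fun i => t (Fintype.card α - 1) ≤ z i := by
    rw [hcover]; exact mem_univ i
  simpa using hi

noncomputable def depthBound (C : ℝ) : ℕ → ℝ
  | 0 => 0
  | s + 1 => depthBound C s + C * Real.exp (depthBound C s)

theorem depthBound_monotone {C : ℝ} (hC : 0 ≤ C) : Monotone (depthBound C) :=
  monotone_nat_of_le_succ fun s => le_add_of_nonneg_right (by positivity)

theorem depthBound_nonneg {C : ℝ} (hC : 0 ≤ C) (s : ℕ) : 0 ≤ depthBound C s :=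
  depthBound_monotone hC (Nat.zero_le s)

theorem sub_depthBound_succ_le {C M a b : ℝ} {s : ℕ} (hC : 0 ≤ C)
    (hedge : Real.exp a * (a - b) ≤ C * Real.exp M) (ha : M - depthBound C s ≤ a) :
    M - depthBound C (s + 1) ≤ b := by
  have hdrop : a - b ≤ C * Real.exp (depthBound C s) := by
    have hsplit : Real.exp M = Real.exp a * Real.exp (M - a) := by rw [← Real.exp_add]; ring_nf
    have : a - b ≤ C * Real.exp (M - a) :=
      le_of_mul_le_mul_left (by rw [hsplit] at hedge; linarith) (Real.exp_pos a)
    exact this.trans (by gcongr; linarith)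
  simp only [depthBound]
  linarith

theorem Real.exp_mul_sub_le_exp (a b : ℝ) : Real.exp a * (b - a) ≤ Real.exp b := by
  calc Real.exp a * (b - a) ≤ Real.exp a * Real.exp (b - a) := by
        gcongr; linarith [Real.add_one_le_exp (b - a)]
    _ = Real.exp b := by rw [← Real.exp_add]; ring_nf

theorem sum_exp_mul_sub_neg_of_steep {ι : Type*} [DecidableEq ι] {R : Finset (ι × ι)}
    {κ : ι × ι → ℝ} {z : ι → ℝ} {D M : ℝ} {g : ι × ι} (hD : 0 ≤ D) (hκ : ∀ e ∈ R, 0 < κ e)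
    (hκg : ∀ e ∈ R, κ e ≤ D * κ g) (hM : ∀ i, z i ≤ M) (hg : g ∈ R)
    (hsteep : #R * D * Real.exp M < Real.exp (z g.1) * (z g.1 - z g.2)) :
    ∑ e ∈ R, Real.exp (z e.1) * κ e * (z e.2 - z e.1) < 0 := by
  have hterm : ∀ e ∈ R, Real.exp (z e.1) * κ e * (z e.2 - z e.1) ≤ D * κ g * Real.exp M := by
    intro e he
    calc Real.exp (z e.1) * κ e * (z e.2 - z e.1)
        = κ e * (Real.exp (z e.1) * (z e.2 - z e.1)) := by ring
      _ ≤ κ e * Real.exp M := by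
        gcongr
        · exact (hκ e he).le
        · exact (Real.exp_mul_sub_le_exp _ _).trans (Real.exp_le_exp.mpr (hM _))
      _ ≤ D * κ g * Real.exp M := by gcongr; exact hκg e he
  have hrest : ∑ e ∈ R.erase g, Real.exp (z e.1) * κ e * (z e.2 - z e.1)
      ≤ #R * (D * κ g * Real.exp M) :=
    calc _ ≤ #(R.erase g) * (D * κ g * Real.exp M) := by
          simpa using sum_le_sum fun e he => hterm e (mem_of_mem_erase he)
      _ ≤ #R * (D * κ g * Real.exp M) := by
          have := (hκ g hg).le
          gcongr
          exact erase_subset g R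
  have hsteep' : κ g * (#R * D * Real.exp M) < κ g * (Real.exp (z g.1) * (z g.1 - z g.2)) :=
    mul_lt_mul_of_pos_left hsteep (hκ g hg)
  rw [← add_sum_erase R _ hg]
  nlinarith

theorem stmt_9_general (m : ℕ) (R : Finset (Fin m × Fin m))
    (hconn : ∀ i j : Fin m, Relation.ReflTransGen (fun a b => (a, b) ∈ R) i j)
    (D : ℝ) (hD : 0 < D) :
    ∃ L > (0 : ℝ), ∀ κ : Fin m × Fin m → ℝ, (∀ e ∈ R, 0 < κ e) →
      (∀ e ∈ R, ∀ e' ∈ R, κ e ≤ D * κ e') →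
      ∀ z : Fin m → ℝ, (∑ i, z i = 0) → (∃ k, L ≤ z k) →
        ∑ e ∈ R, Real.exp (z e.1) * κ e * (z e.2 - z e.1) < 0 := by
  set C : ℝ := #R * D
  have hC : 0 ≤ C := by positivity
  refine ⟨depthBound C (m - 1) + 1, by linarith [depthBound_nonneg hC (m - 1)], ?_⟩
  rintro κ hκ hκD z hsum ⟨k, hk⟩
  have : Nonempty (Fin m) := ⟨k⟩
  obtain ⟨i₀, hi₀⟩ := Finite.exists_max z
  by_contra hnonneg
  have hflat : ∀ e ∈ R, Real.exp (z e.1) * (z e.1 - z e.2) ≤ C * Real.exp (z i₀) :=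
    fun g hg => le_of_not_gt fun hsteep => hnonneg <|
      sum_exp_mul_sub_neg_of_steep hD.le hκ (fun e he => hκD e he g hg) hi₀ hg hsteep
  have hlow : ∀ i, z i₀ - depthBound C (m - 1) ≤ z i := by
    simpa using le_of_rel_propagate hconn (i₀ := i₀) (t := fun s => z i₀ - depthBound C s)
      (fun s s' hss' => sub_le_sub_left (depthBound_monotone hC hss') _) (by simp [depthBound])
      (fun s a b hab ha => sub_depthBound_succ_le hC (hflat (a, b) hab) ha)
  have hpos : 0 < ∑ i, z i :=
    sum_pos (fun i _ => by linarith [hlow i, hi₀ k]) ⟨k, mem_univ k⟩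
  linarith

/-- Let `(C, R)` be a finite strongly connected digraph on `m ≥ 2` vertices without
self-loops and let `D > 0`. Then there is `L > 0`, depending only on the graph and `D`,
such that for every positive edge-labelling `κ` with `max(κ)/min(κ) ≤ D`
(i.e. `κ e ≤ D * κ e'` for all edges `e, e'`) and every `z ∈ ℝ^m` with `∑ i, z i = 0`
and `max(z) ≥ L`, one has `z^⊤ A_κ e^z = ∑_{(i,j)∈R} e^{z_i} κ_{ij} (z_j − z_i) < 0`. -/
theorem stmt_9 (m : ℕ) (hm : 2 ≤ m) (R : Finset (Fin m × Fin m))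
    (hloop : ∀ e ∈ R, e.1 ≠ e.2)
    (hconn : ∀ i j : Fin m, Relation.ReflTransGen (fun a b => (a, b) ∈ R) i j)
    (D : ℝ) (hD : 0 < D) :
    ∃ L > (0 : ℝ), ∀ κ : Fin m × Fin m → ℝ, (∀ e ∈ R, 0 < κ e) →
      (∀ e ∈ R, ∀ e' ∈ R, κ e ≤ D * κ e') →
      ∀ z : Fin m → ℝ, (∑ i, z i = 0) → (∃ k, L ≤ z k) →
        ∑ e ∈ R, Real.exp (z e.1) * κ e * (z e.2 - z e.1) < 0 :=
  stmt_9_general m R hconn D hD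
end

section
/- (Birch's theorem) Let S be a linear subspace of ℝⁿ and let p, x* ∈ ℝⁿ₊. Then there exists a unique x ∈ ℝⁿ₊ such that x − p ∈ S and log x − log x* ∈ S^⊥ (log taken coordinatewise). -/
/-!
The point `x` is the minimiser of the relative entropy
`f x = ∑ᵢ xᵢ log (xᵢ / x*ᵢ) - xᵢ` on the polytope `{x ≥ 0 | x - p ∈ S}`. Sublevel sets of `f`
are compact, so a minimiser `a` exists. It is strictly positive: since `u log u` has slope `-∞`
at `0` and `p > 0`, moving from `a` towards `p` by `t` changes `f` by `O(t) + t log t · ∑_{aᵢ = 0} pᵢ`,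
which is negative for small `t` unless no coordinate of `a` vanishes. At an interior minimiser the
derivative of `f` along every direction of `S` vanishes, i.e. `log a - log x* ⊥ S`. For uniqueness,
two such points `x, y` satisfy `∑ᵢ (log xᵢ - log yᵢ)(xᵢ - yᵢ) = ⟪log x - log y, x - y⟫ = 0`, and
every term of the sum is positive unless `xᵢ = yᵢ`.
-/

open Real Finset

noncomputable def entropyTerm (c u : ℝ) : ℝ := u * log u - c * u

section EntropyTerm

variable {c u : ℝ}

lemma neg_exp_le_entropyTerm (c : ℝ) (hu : 0 ≤ u) : -exp (c - 1) ≤ entropyTerm c u := by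
  unfold entropyTerm
  rcases hu.eq_or_lt with rfl | hu
  · simpa using (exp_pos _).le
  · have h := add_one_le_exp (c - 1 - log u)
    rw [exp_sub, exp_log hu, le_div_iff₀ hu] at h
    nlinarith

lemma le_max_of_entropyTerm_le {M : ℝ} (h : entropyTerm c u ≤ M) : u ≤ max (exp (c + 1)) M := by
  by_contra! hlt
  have hu : exp (c + 1) < u := (le_max_left _ _).trans_lt hlt
  have hlog : c + 1 < log u := (lt_log_iff_exp_lt ((exp_pos _).trans hu)).2 hu
  have hM : M < u := (le_max_right _ _).trans_lt hlt
  unfold entropyTerm at h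
  nlinarith [exp_pos (c + 1)]

lemma entropyTerm_segment_le {a b t : ℝ} (ha : 0 ≤ a) (hb : 0 < b) (ht0 : 0 < t) (ht1 : t ≤ 1) :
    entropyTerm c ((1 - t) * a + t * b) ≤
      (1 - t) * entropyTerm c a + t * entropyTerm c b + if a = 0 then t * log t * b else 0 := by
  unfold entropyTerm
  split_ifs with h0
  · subst h0
    simp only [mul_zero, zero_add, log_zero, sub_zero, log_mul ht0.ne' hb.ne']
    linarith
  · have hcv := convexOn_mul_log.2 (Set.mem_Ici.2 ha) (Set.mem_Ici.2 hb.le)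
      (by linarith : (0 : ℝ) ≤ 1 - t) ht0.le (by ring)
    simp only [smul_eq_mul] at hcv
    nlinarith

lemma hasDerivAt_entropyTerm (c : ℝ) (hu : u ≠ 0) :
    HasDerivAt (entropyTerm c) (log u + 1 - c) u :=
  (hasDerivAt_mul_log hu).sub ((hasDerivAt_id u).const_mul c) |>.congr_deriv (by simp)

lemma log_sub_log_mul_sub_pos {v : ℝ} (hu : 0 < u) (hv : 0 < v) (huv : u ≠ v) :
    0 < (log u - log v) * (u - v) := by
  rcases huv.lt_or_gt with h | h
  · exact mul_pos_of_neg_of_neg (sub_neg.2 (log_lt_log hu h)) (sub_neg.2 h)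
  · exact mul_pos (sub_pos.2 (log_lt_log hv h)) (sub_pos.2 h)

lemma le_max_of_sum_entropyTerm_le {ι : Type*} [Fintype ι] {c x : ι → ℝ} {M : ℝ}
    (hx : ∀ i, 0 ≤ x i) (hM : ∑ i, entropyTerm (c i) (x i) ≤ M) (i : ι) :
    x i ≤ max (exp (c i + 1)) (M + ∑ j, exp (c j - 1)) := by
  refine le_max_of_entropyTerm_le ?_
  have hsingle : entropyTerm (c i) (x i) + exp (c i - 1) ≤
      ∑ j, (entropyTerm (c j) (x j) + exp (c j - 1)) :=
    single_le_sum (fun j _ => neg_le_iff_add_nonneg.1 (neg_exp_le_entropyTerm (c j) (hx j)))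
      (mem_univ i)
  rw [sum_add_distrib] at hsingle
  linarith [exp_pos (c i - 1)]

end EntropyTerm

namespace Birch

variable {ι : Type*}

def polytope (S : Submodule ℝ (EuclideanSpace ℝ ι)) (p : EuclideanSpace ℝ ι) :
    Set (EuclideanSpace ℝ ι) :=
  {x | (∀ i, 0 ≤ x i) ∧ x - p ∈ S}

variable {S : Submodule ℝ (EuclideanSpace ℝ ι)} {p s : EuclideanSpace ℝ ι}

lemma convex_polytope : Convex ℝ (polytope S p) := by
  rintro x ⟨hx0, hxS⟩ y ⟨hy0, hyS⟩ a b ha hb hab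
  refine ⟨fun i => ?_, ?_⟩
  · simp only [PiLp.add_apply, PiLp.smul_apply, smul_eq_mul]
    have := hx0 i; have := hy0 i; positivity
  · have : a • x + b • y - p = a • (x - p) + b • (y - p) := by
      linear_combination (norm := module) hab • p
    rw [this]
    exact S.add_mem (S.smul_mem a hxS) (S.smul_mem b hyS)

variable [Fintype ι]

/-- For `s > 0` this is `∑ᵢ xᵢ log (xᵢ / sᵢ) - xᵢ`, whose gradient is `log x - log s`. -/
noncomputable def potential (s x : EuclideanSpace ℝ ι) : ℝ :=
  ∑ i, entropyTerm (log (s i) + 1) (x i)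

lemma continuous_potential : Continuous (potential (ι := ι) s) := by
  unfold potential entropyTerm
  fun_prop

lemma isClosed_polytope : IsClosed (polytope S p) := by
  have hnonneg : IsClosed {x : EuclideanSpace ℝ ι | ∀ i, 0 ≤ x i} := by
    simp only [Set.ofPred_forall]
    exact isClosed_iInter fun i => isClosed_le continuous_const (by fun_prop)
  exact hnonneg.inter (S.closed_of_finiteDimensional.preimage (by fun_prop))

lemma isCompact_polytope_inter_sublevel (M : ℝ) :
    IsCompact (polytope S p ∩ {x | potential s x ≤ M}) := by
  set B : ι → ℝ := fun i => max (exp (log (s i) + 1 + 1)) (M + ∑ j, exp (log (s j) + 1 - 1))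
  have hbox : IsCompact (EuclideanSpace.equiv ι ℝ ⁻¹' Set.Icc 0 B) :=
    (EuclideanSpace.equiv ι ℝ).toHomeomorph.isCompact_preimage.2 isCompact_Icc
  refine hbox.of_isClosed_subset
    (isClosed_polytope.inter (isClosed_le continuous_potential continuous_const)) ?_
  rintro x ⟨⟨hx0, -⟩, hxM⟩
  exact ⟨hx0, le_max_of_sum_entropyTerm_le hx0 hxM⟩

lemma exists_isMinOn_potential (hp : ∀ i, 0 ≤ p i) :
    ∃ a ∈ polytope S p, IsMinOn (potential s) (polytope S p) a := by
  have hpP : p ∈ polytope S p := ⟨hp, by simp⟩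
  obtain ⟨a, ⟨haP, hap⟩, hmin⟩ :=
    (isCompact_polytope_inter_sublevel (S := S) (s := s) (potential s p)).exists_isMinOn
      ⟨p, hpP, le_refl (potential s p)⟩ continuous_potential.continuousOn
  refine ⟨a, haP, fun x hx => ?_⟩
  rcases le_total (potential s x) (potential s p) with h | h
  · exact hmin ⟨hx, h⟩
  · exact hap.trans h

lemma toLp_mem_orthogonal_iff (g : ι → ℝ) :
    (WithLp.toLp 2 g : EuclideanSpace ℝ ι) ∈ Sᗮ ↔ ∀ v ∈ S, ∑ i, g i * v i = 0 := by
  simp [Submodule.mem_orthogonal, PiLp.inner_apply]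

lemma potential_segment_le {a : EuclideanSpace ℝ ι} {t : ℝ} (ha : ∀ i, 0 ≤ a i)
    (hp : ∀ i, 0 < p i) (ht0 : 0 < t) (ht1 : t ≤ 1) :
    potential s ((1 - t) • a + t • p) ≤
      (1 - t) * potential s a + t * potential s p + t * log t * ∑ i with a i = 0, p i := by
  unfold potential
  rw [mul_sum, mul_sum, mul_sum, sum_filter, ← sum_add_distrib, ← sum_add_distrib]
  refine sum_le_sum fun i _ => ?_
  simpa only [PiLp.add_apply, PiLp.smul_apply, smul_eq_mul, mul_ite, mul_zero] using
    entropyTerm_segment_le (ha i) (hp i) ht0 ht1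

lemma pos_of_isMinOn_potential (hp : ∀ i, 0 < p i) {a : EuclideanSpace ℝ ι}
    (ha : a ∈ polytope S p) (hmin : IsMinOn (potential s) (polytope S p) a) (i : ι) :
    0 < a i := by
  by_contra! hi
  have hpP : p ∈ polytope S p := ⟨fun i => (hp i).le, by simp⟩
  set P := ∑ i with a i = 0, p i
  have hP : 0 < P := sum_pos' (fun i _ => (hp i).le)
    ⟨i, mem_filter.2 ⟨mem_univ _, le_antisymm hi (ha.1 i)⟩, hp i⟩
  set D := potential s p - potential s a
  have hD : 0 ≤ D := sub_nonneg.2 (hmin hpP)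
  set t := exp (-(D + 1) / P)
  have ht0 : 0 < t := exp_pos _
  have ht1 : t ≤ 1 := exp_le_one_iff.2 (div_nonpos_of_nonpos_of_nonneg (by linarith) hP.le)
  have hlog : t * log t * P = -(t * (D + 1)) := by
    rw [mul_assoc, log_exp, div_mul_cancel₀ _ hP.ne']
    ring
  have hy : (1 - t) • a + t • p ∈ polytope S p :=
    convex_polytope ha hpP (by linarith) ht0.le (by ring)
  have := (hmin hy).trans (potential_segment_le ha.1 hp ht0 ht1)
  nlinarith

lemma hasDerivAt_potential_line {a : EuclideanSpace ℝ ι} (ha : ∀ i, 0 < a i)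
    (v : EuclideanSpace ℝ ι) :
    HasDerivAt (fun t : ℝ => potential s (a + t • v)) (∑ i, (log (a i) - log (s i)) * v i) 0 := by
  unfold potential
  refine HasDerivAt.fun_sum fun i _ => ?_
  have hline : HasDerivAt (fun t : ℝ => a i + t * v i) (v i) 0 := by
    simpa using ((hasDerivAt_id (0 : ℝ)).mul_const (v i)).const_add (a i)
  have hE : HasDerivAt (entropyTerm (log (s i) + 1)) (log (a i) + 1 - (log (s i) + 1))
      (a i + 0 * v i) := by
    rw [zero_mul, add_zero]
    exact hasDerivAt_entropyTerm _ (ha i).ne'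
  have hfun : (fun t : ℝ => entropyTerm (log (s i) + 1) ((a + t • v) i)) =
      entropyTerm (log (s i) + 1) ∘ fun t => a i + t * v i := by
    funext t
    simp
  rw [hfun]
  exact (hE.comp 0 hline).congr_deriv (by ring)

lemma log_sub_mem_orthogonal_of_isMinOn {a : EuclideanSpace ℝ ι} (ha : a ∈ polytope S p)
    (hpos : ∀ i, 0 < a i) (hmin : IsMinOn (potential s) (polytope S p) a) :
    (WithLp.toLp 2 (fun i => log (a i) - log (s i)) : EuclideanSpace ℝ ι) ∈ Sᗮ := by
  refine (toLp_mem_orthogonal_iff _).2 fun v hv => ?_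
  refine IsLocalMin.hasDerivAt_eq_zero ?_ (hasDerivAt_potential_line hpos v)
  have hcoord : ∀ᶠ t in nhds (0 : ℝ), ∀ i, 0 < a i + t * v i :=
    Filter.eventually_all.2 fun i =>
      continuousAt_const.eventually_lt (by fun_prop) (by simpa using hpos i)
  filter_upwards [hcoord] with t ht
  have hmem : a + t • v ∈ polytope S p := by
    refine ⟨fun i => by simpa using (ht i).le, ?_⟩
    rw [add_sub_right_comm]
    exact S.add_mem ha.2 (S.smul_mem t hv)
  simpa using hmin hmem

lemma eq_of_sub_mem_of_log_sub_mem_orthogonal {x y : EuclideanSpace ℝ ι}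
    (hx : ∀ i, 0 < x i) (hy : ∀ i, 0 < y i) (hxy : x - y ∈ S)
    (hxs : (WithLp.toLp 2 (fun i => log (x i) - log (s i)) : EuclideanSpace ℝ ι) ∈ Sᗮ)
    (hys : (WithLp.toLp 2 (fun i => log (y i) - log (s i)) : EuclideanSpace ℝ ι) ∈ Sᗮ) :
    x = y := by
  rw [toLp_mem_orthogonal_iff] at hxs hys
  have hsum : ∑ i, (log (x i) - log (y i)) * (x i - y i) = 0 := by
    have := sub_eq_zero.2 ((hxs _ hxy).trans (hys _ hxy).symm)
    rw [← sum_sub_distrib] at this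
    simpa [← sub_mul] using this
  by_contra hne
  obtain ⟨i, hi⟩ : ∃ i, x i ≠ y i := by
    contrapose! hne
    ext i
    exact hne i
  refine hsum.not_gt <| sum_pos' (fun j _ => ?_)
    ⟨i, mem_univ _, log_sub_log_mul_sub_pos (hx i) (hy i) hi⟩
  rcases eq_or_ne (x j) (y j) with h | h
  · simp [h]
  · exact (log_sub_log_mul_sub_pos (hx j) (hy j) h).le

end Birch

theorem stmt_13_general (n : ℕ) (S : Submodule ℝ (EuclideanSpace ℝ (Fin n)))
    (p xstar : EuclideanSpace ℝ (Fin n)) (hp : ∀ i, 0 < p i) :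
    ∃! x : EuclideanSpace ℝ (Fin n), (∀ i, 0 < x i) ∧ x - p ∈ S ∧
      (WithLp.toLp 2 (fun i => Real.log (x i) - Real.log (xstar i)) : EuclideanSpace ℝ (Fin n)) ∈ Sᗮ := by
  obtain ⟨a, ha, hmin⟩ := Birch.exists_isMinOn_potential (S := S) (s := xstar) fun i => (hp i).le
  have hpos := Birch.pos_of_isMinOn_potential hp ha hmin
  have horth := Birch.log_sub_mem_orthogonal_of_isMinOn ha hpos hmin
  refine ⟨a, ⟨hpos, ha.2, horth⟩, fun y ⟨hy, hyp, hyo⟩ => ?_⟩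
  refine Birch.eq_of_sub_mem_of_log_sub_mem_orthogonal hy hpos ?_ hyo horth
  simpa using S.sub_mem hyp ha.2

/-- Birch's theorem: for a subspace `S ≤ ℝⁿ` and `p, x* ∈ ℝⁿ₊`, there is a unique
`x ∈ ℝⁿ₊` with `x − p ∈ S` and `log x − log x* ∈ S^⊥` (log coordinatewise). -/
theorem stmt_13 (n : ℕ) (S : Submodule ℝ (EuclideanSpace ℝ (Fin n)))
    (p xstar : EuclideanSpace ℝ (Fin n)) (hp : ∀ i, 0 < p i) (hx : ∀ i, 0 < xstar i) :
    ∃! x : EuclideanSpace ℝ (Fin n), (∀ i, 0 < x i) ∧ x - p ∈ S ∧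
      (WithLp.toLp 2 (fun i => Real.log (x i) - Real.log (xstar i)) : EuclideanSpace ℝ (Fin n)) ∈ Sᗮ :=
  stmt_13_general n S p xstar hp
end

section
/- Let Y ∈ ℝ^{n×m}, I ∈ ℝ^{m×d}, set 𝓘 = ran I and K = Π_𝓘(ran Y^⊤), and let p ∈ ℝⁿ₊ and P = (p + ran(YI)) ∩ ℝⁿ₊. Then the map Ψ : P → K defined by Ψ(x) = Π_𝓘 Y^⊤ log x is a bijection between P and K. -/
/-!
Write `S = ran(YI) ⊆ ℝⁿ`. Since `⟪I u, Yᵀ z⟫ = ⟪YI u, z⟫`, we have `Ψ x = Ψ x'` iff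
`log x - log x' ⊥ S`, and `Ψ x = Π_𝓘 Yᵀ v` iff `log x - v ⊥ S`. So the theorem is
Birch's theorem: for every `v` there is exactly one `x ∈ P` with `log x - v ∈ Sᗮ`.

Uniqueness: if `x - x' ∈ S` and `log x - log x' ∈ Sᗮ`, then
`∑ (xᵢ - x'ᵢ)(log xᵢ - log x'ᵢ) = 0`, and each term is positive unless `xᵢ = x'ᵢ`
because `log` is strictly increasing.

Existence: as `p > 0`, `G w = ∑ exp (vᵢ + wᵢ) - pᵢ wᵢ` tends to `+∞` at infinity, so it
attains its minimum on `Sᗮ` at some `w`. Setting `x = exp (v + w)`, we get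
`log x - v = w ∈ Sᗮ`, and stationarity of `G` along `Sᗮ` says `x - p ⊥ Sᗮ`, i.e. `x - p ∈ S`.
-/

open Matrix

/-- The range of `mulVec A`, viewed as a subspace of Euclidean space. -/
noncomputable def matRangeE {m k : ℕ} (A : Matrix (Fin m) (Fin k) ℝ) :
    Submodule ℝ (EuclideanSpace ℝ (Fin m)) :=
  Submodule.comap
    (WithLp.linearEquiv 2 ℝ (Fin m → ℝ) : EuclideanSpace ℝ (Fin m) →ₗ[ℝ] (Fin m → ℝ))
    (LinearMap.range A.mulVecLin)

open Filter Real WithLp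

theorem tendsto_sum_apply_cocompact_atTop {ι : Type*} [Fintype ι] {X : ι → Type*}
    [∀ i, TopologicalSpace (X i)] [∀ i, Nonempty (X i)] {f : ∀ i, X i → ℝ}
    (hcont : ∀ i, Continuous (f i)) (hf : ∀ i, Tendsto (f i) (cocompact (X i)) atTop) :
    Tendsto (fun x : ∀ i, X i => ∑ i, f i (x i)) (cocompact (∀ i, X i)) atTop := by
  choose c hc using fun i => (hcont i).exists_forall_le (hf i)
  rw [← coprodᵢ_cocompact, Filter.coprodᵢ, tendsto_iSup]
  intro i
  refine tendsto_atTop_mono (fun x => ?_)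
    (tendsto_atTop_add_const_right _ (∑ j, f j (c j) - f i (c i)) ((hf i).comp tendsto_comap))
  have : f i (x i) - f i (c i) ≤ ∑ j, (f j (x j) - f j (c j)) :=
    Finset.single_le_sum (f := fun j => f j (x j) - f j (c j))
      (fun j _ => sub_nonneg.mpr (hc j (x j))) (Finset.mem_univ i)
  simp only [Function.comp_apply, Finset.sum_sub_distrib] at this ⊢
  linarith

theorem tendsto_exp_add_sub_mul_cocompact_atTop (a : ℝ) {c : ℝ} (hc : 0 < c) :
    Tendsto (fun t => exp (a + t) - c * t) (cocompact ℝ) atTop := by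
  rw [cocompact_eq_atBot_atTop, tendsto_sup]
  constructor
  · refine tendsto_atTop_mono (fun t => ?_) (tendsto_neg_atBot_atTop.const_mul_atTop hc)
    linarith [exp_pos (a + t)]
  · -- `exp ≥ 1 + id` at `a + t - log (c + 1)` gives slope `c + 1` for `exp (a + t)`.
    refine tendsto_atTop_mono (fun t => ?_)
      (tendsto_atTop_add_const_right _ ((c + 1) * (1 + a - log (c + 1))) tendsto_id)
    have h := add_one_le_exp (a + t - log (c + 1))
    rw [exp_sub, exp_log (by linarith), le_div_iff₀ (by linarith)] at h
    simp only [id]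
    nlinarith

section Birch

variable {ι : Type*} [Fintype ι]

theorem exists_mem_forall_sum_exp_sub_mul_eq_zero (T : Submodule ℝ (EuclideanSpace ℝ ι))
    {p : ι → ℝ} (hp : ∀ i, 0 < p i) (v : ι → ℝ) :
    ∃ w ∈ T, ∀ s ∈ T, ∑ i, (exp (v i + w i) - p i) * s i = 0 := by
  set G : EuclideanSpace ℝ ι → ℝ := fun w => ∑ i, (exp (v i + w i) - p i * w i)
  have hG : Continuous G := by fun_prop
  have hG_coercive : Tendsto G (cocompact _) atTop :=
    (tendsto_sum_apply_cocompact_atTop (fun i => by fun_prop)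
      (fun i => tendsto_exp_add_sub_mul_cocompact_atTop (v i) (hp i))).comp
      (EuclideanSpace.equiv ι ℝ).toHomeomorph.isClosedEmbedding.tendsto_cocompact
  obtain ⟨w, hwT, hmin⟩ := hG.continuousOn.exists_isMinOn' T.closed_of_finiteDimensional
    T.zero_mem ((hG_coercive.eventually_ge_atTop (G 0)).filter_mono inf_le_left)
  refine ⟨w, hwT, fun s hs => ?_⟩
  have hlocalMin : IsLocalMin (fun t : ℝ => G (w + t • s)) 0 :=
    Eventually.of_forall fun t => by
      simpa using hmin (T.add_mem hwT (T.smul_mem t hs))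
  have hderiv : HasDerivAt (fun t : ℝ => G (w + t • s))
      (∑ i, (exp (v i + w i) - p i) * s i) 0 := by
    have hG_line : (fun t : ℝ => G (w + t • s)) =
        fun t => ∑ i, (exp (v i + (w i + t * s i)) - p i * (w i + t * s i)) := by
      ext t; simp [G]
    rw [hG_line]
    refine HasDerivAt.fun_sum fun i _ => ?_
    have hline : HasDerivAt (fun t : ℝ => w i + t * s i) (s i) 0 := by
      simpa using ((hasDerivAt_id (0 : ℝ)).mul_const (s i)).const_add (w i)
    convert (hline.const_add (v i)).exp.fun_sub (hline.const_mul (p i)) using 1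
    rw [zero_mul, add_zero, sub_mul]
  exact hlocalMin.hasDerivAt_eq_zero hderiv

theorem StrictMonoOn.eq_of_sum_sub_mul_sub_eq_zero {f : ℝ → ℝ} {s : Set ℝ}
    (hf : StrictMonoOn f s) {x y : ι → ℝ} (hx : ∀ i, x i ∈ s) (hy : ∀ i, y i ∈ s)
    (h : ∑ i, (x i - y i) * (f (x i) - f (y i)) = 0) : x = y := by
  have hpos : ∀ i, x i ≠ y i → 0 < (x i - y i) * (f (x i) - f (y i)) := fun i hne =>
    hne.lt_or_gt.elim
      (fun hlt => mul_pos_of_neg_of_neg (sub_neg.mpr hlt) (sub_neg.mpr (hf (hx i) (hy i) hlt)))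
      (fun hgt => mul_pos (sub_pos.mpr hgt) (sub_pos.mpr (hf (hy i) (hx i) hgt)))
  have hnonneg : ∀ i ∈ Finset.univ, 0 ≤ (x i - y i) * (f (x i) - f (y i)) := fun i _ => by
    by_cases hxy : x i = y i
    · simp [hxy]
    · exact (hpos i hxy).le
  funext i
  by_contra hne
  exact (hpos i hne).ne' ((Finset.sum_eq_zero_iff_of_nonneg hnonneg).mp h i (Finset.mem_univ i))

theorem exists_pos_sub_mem_log_sub_mem_orthogonal (S : Submodule ℝ (EuclideanSpace ℝ ι))
    {p : ι → ℝ} (hp : ∀ i, 0 < p i) (v : ι → ℝ) :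
    ∃ x : ι → ℝ, (∀ i, 0 < x i) ∧ toLp 2 (x - p) ∈ S ∧
      toLp 2 (fun i => log (x i) - v i) ∈ Sᗮ := by
  obtain ⟨w, hw, hstat⟩ := exists_mem_forall_sum_exp_sub_mul_eq_zero Sᗮ hp v
  refine ⟨fun i => exp (v i + w i), fun i => exp_pos _, ?_, by simpa using hw⟩
  rw [← S.orthogonal_orthogonal, Submodule.mem_orthogonal']
  intro s hs
  simpa [EuclideanSpace.inner_eq_star_dotProduct, dotProduct, mul_comm] using hstat s hs

theorem eq_of_sub_mem_of_log_sub_mem_orthogonal (S : Submodule ℝ (EuclideanSpace ℝ ι))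
    {x y : ι → ℝ} (hx : ∀ i, 0 < x i) (hy : ∀ i, 0 < y i) (hS : toLp 2 (x - y) ∈ S)
    (hSperp : toLp 2 (fun i => log (x i) - log (y i)) ∈ Sᗮ) : x = y := by
  refine strictMonoOn_log.eq_of_sum_sub_mul_sub_eq_zero hx hy ?_
  simpa [EuclideanSpace.inner_eq_star_dotProduct, dotProduct, mul_comm] using
    Submodule.inner_right_of_mem_orthogonal hS hSperp

end Birch

theorem Submodule.starProjection_eq_starProjection_iff {𝕜 E : Type*} [RCLike 𝕜]
    [NormedAddCommGroup E] [InnerProductSpace 𝕜 E] (K : Submodule 𝕜 E)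
    [K.HasOrthogonalProjection] {x y : E} :
    K.starProjection x = K.starProjection y ↔ x - y ∈ Kᗮ := by
  rw [← sub_eq_zero, ← map_sub, Submodule.starProjection_apply_eq_zero_iff]

theorem toLp_mem_matRangeE_iff {m k : ℕ} {A : Matrix (Fin m) (Fin k) ℝ} {z : Fin m → ℝ} :
    toLp 2 z ∈ matRangeE A ↔ ∃ u, A *ᵥ u = z :=
  Iff.rfl

theorem toLp_mem_orthogonal_matRangeE_iff {m k : ℕ} {A : Matrix (Fin m) (Fin k) ℝ}
    {w : Fin m → ℝ} : toLp 2 w ∈ (matRangeE A)ᗮ ↔ w ᵥ* A = 0 := by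
  simp_rw [Submodule.mem_orthogonal, ← dotProduct_eq_zero_iff, ← dotProduct_mulVec]
  constructor
  · intro h u
    simpa [EuclideanSpace.inner_eq_star_dotProduct] using
      h _ (toLp_mem_matRangeE_iff.mpr ⟨u, rfl⟩)
  · rintro h z ⟨u, hu⟩
    obtain rfl : z = toLp 2 (A *ᵥ u) := congrArg (toLp 2) hu.symm
    simpa [EuclideanSpace.inner_eq_star_dotProduct] using h u

theorem toLp_transpose_mulVec_mem_orthogonal_matRangeE_iff {n m d : ℕ}
    (A : Matrix (Fin n) (Fin m) ℝ) (B : Matrix (Fin m) (Fin d) ℝ) (w : Fin n → ℝ) :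
    toLp 2 (Aᵀ *ᵥ w) ∈ (matRangeE B)ᗮ ↔ toLp 2 w ∈ (matRangeE (A * B))ᗮ := by
  rw [toLp_mem_orthogonal_matRangeE_iff, toLp_mem_orthogonal_matRangeE_iff, mulVec_transpose,
    vecMul_vecMul]

/-- Let `Y ∈ ℝ^{n×m}`, `I ∈ ℝ^{m×d}`, `𝓘 = ran I`, `K = Π_𝓘(ran Y^⊤)`, `p ∈ ℝⁿ₊`, and
`P = (p + ran(YI)) ∩ ℝⁿ₊`.  Then `Ψ : P → K`, `Ψ(x) = Π_𝓘 Y^⊤ log x`, is a bijection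
between `P` and `K`. -/
theorem stmt_14 (n m d : ℕ) (Y : Matrix (Fin n) (Fin m) ℝ)
    (Imat : Matrix (Fin m) (Fin d) ℝ) (p : Fin n → ℝ) (hp : ∀ i, 0 < p i) :
    Set.BijOn
      (fun x : Fin n → ℝ =>
        ((matRangeE Imat).subtype.comp
            (matRangeE Imat).orthogonalProjectionOnto.toLinearMap)
          ((WithLp.linearEquiv 2 ℝ (Fin m → ℝ)).symm
            (Yᵀ.mulVec (fun i => Real.log (x i)))))
      {x : Fin n → ℝ | (∀ i, 0 < x i) ∧ ∃ u : Fin d → ℝ, x = p + (Y * Imat).mulVec u}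
      (Submodule.map
        ((matRangeE Imat).subtype.comp
          (matRangeE Imat).orthogonalProjectionOnto.toLinearMap)
        (matRangeE Yᵀ) : Set (EuclideanSpace ℝ (Fin m))) := by
  have hproj : (matRangeE Imat).subtype.comp
      (matRangeE Imat).orthogonalProjectionOnto.toLinearMap =
        (matRangeE Imat).starProjection.toLinearMap := rfl
  simp only [hproj, WithLp.coe_symm_linearEquiv, ContinuousLinearMap.coe_coe]
  refine ⟨fun x _ => Submodule.mem_map_of_mem (toLp_mem_matRangeE_iff.mpr ⟨_, rfl⟩), ?_, ?_⟩
  · rintro x₁ ⟨hx₁, u₁, rfl⟩ x₂ ⟨hx₂, u₂, rfl⟩ h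
    refine eq_of_sub_mem_of_log_sub_mem_orthogonal (matRangeE (Y * Imat)) hx₁ hx₂
      (toLp_mem_matRangeE_iff.mpr ⟨u₁ - u₂, by rw [mulVec_sub]; abel⟩) ?_
    rw [← toLp_transpose_mulVec_mem_orthogonal_matRangeE_iff]
    rwa [Submodule.starProjection_eq_starProjection_iff, ← WithLp.toLp_sub, ← mulVec_sub] at h
  · rintro _ ⟨z, ⟨v, hv⟩, rfl⟩
    obtain rfl : z = toLp 2 (Yᵀ *ᵥ v) := congrArg (toLp 2) hv.symm
    obtain ⟨x, hx, hxp, hlog⟩ :=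
      exists_pos_sub_mem_log_sub_mem_orthogonal (matRangeE (Y * Imat)) hp v
    obtain ⟨u, hu⟩ := toLp_mem_matRangeE_iff.mp hxp
    refine ⟨x, ⟨hx, u, by rw [hu]; abel⟩, ?_⟩
    rw [← toLp_transpose_mulVec_mem_orthogonal_matRangeE_iff] at hlog
    show (matRangeE Imat).starProjection _ = (matRangeE Imat).starProjection _
    rwa [Submodule.starProjection_eq_starProjection_iff, ← WithLp.toLp_sub, ← mulVec_sub]
end

section
/- Let Y ∈ ℝ^{n×m}, I ∈ ℝ^{m×d}, 𝓘 = ran I, K = Π_𝓘(ran Y^⊤), p ∈ ℝⁿ₊, and P = (p + ran(YI)) ∩ ℝⁿ₊. Then there exists a unique function F : K → 𝓘^⊥ such that Y^⊤ log P = {z + F(z) : z ∈ K}; moreover F is continuous. -/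
open Matrix

/-!
Substituting `x = exp y` turns `P` into `M = {y | exp y - p ∈ S}` with `S = ran (Y I)`. Birch's
theorem says that `Π_S` restricted to `M` is a homeomorphism onto `S`. The point of `M` over
`z ∈ S` is the minimiser on `z + Sᗮ` of the coercive potential `∑ (exp yᵢ - pᵢ yᵢ)`, whose gradient
`exp y - p` is then orthogonal to `Sᗮ`; it is unique because `exp` is increasing, and the same
potential, which can only decrease from `Π_S y` to `y`, keeps the preimages of compact sets bounded.

Since `⟪Yᵀ v, I u⟫ = ⟪v, Y I u⟫`, the kernel of `Π_𝓘 Yᵀ` is `Sᗮ`, so `Π_𝓘 Yᵀ` identifies `S`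
linearly with `K`, and `Π_𝓘 Yᵀ : M → K` is a homeomorphism. Hence `Yᵀ M` is the graph over `K` of
the continuous map `F = Π_𝓘ᗮ Yᵀ (Π_𝓘 Yᵀ)⁻¹`, and a graph over `K ⊆ 𝓘` with values in `𝓘ᗮ`
determines its map.
-/

open Real Filter Topology RealInnerProductSpace

lemma exists_pos_forall_le_of_forall_pos {ι : Type*} [Finite ι] {p : ι → ℝ} (hp : ∀ i, 0 < p i) :
    ∃ c, 0 < c ∧ ∀ i, c ≤ p i := by
  rcases isEmpty_or_nonempty ι with _ | _
  · exact ⟨1, one_pos, isEmptyElim⟩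
  · obtain ⟨j, hj⟩ := Finite.exists_min p
    exact ⟨p j, hp j, hj⟩

lemma mul_abs_sub_le_exp_sub_mul (a t : ℝ) : a * |t| - 2 * a ^ 2 ≤ exp t - a * t := by
  rcases le_total t 0 with ht | ht
  · rw [abs_of_nonpos ht]
    nlinarith [exp_pos t]
  · rw [abs_of_nonneg ht]
    nlinarith [quadratic_le_exp_of_nonneg ht, sq_nonneg (t - 2 * a)]

section Birch

variable {ι : Type*} [Fintype ι]

lemma EuclideanSpace.norm_le_sum_abs (y : EuclideanSpace ℝ ι) : ‖y‖ ≤ ∑ i, |y i| := by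
  rw [EuclideanSpace.norm_eq]
  refine Real.sqrt_le_iff.2 ⟨Finset.sum_nonneg fun i _ => abs_nonneg _, ?_⟩
  simp_rw [Real.norm_eq_abs]
  exact Finset.sum_sq_le_sq_sum_of_nonneg fun i _ => abs_nonneg _

noncomputable def expVec (y : EuclideanSpace ℝ ι) : EuclideanSpace ℝ ι :=
  WithLp.toLp 2 fun i => exp (y i)

-- Birch's equations `expVec y - p ∈ S` are the critical point equations of this potential
-- on the affine subspaces `y + Sᗮ`.
noncomputable def expPotential (p y : EuclideanSpace ℝ ι) : ℝ :=
  ∑ i, (exp (y i) - p i * y i)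

lemma exists_mul_norm_sub_le_expPotential {p : EuclideanSpace ℝ ι} (hp : ∀ i, 0 < p i) :
    ∃ c, 0 < c ∧ ∃ C, ∀ y, c * ‖y‖ - C ≤ expPotential p y := by
  obtain ⟨c, hc, hcp⟩ := exists_pos_forall_le_of_forall_pos hp
  refine ⟨c, hc, ∑ i, 2 * p i ^ 2, fun y => ?_⟩
  calc c * ‖y‖ - ∑ i, 2 * p i ^ 2
      ≤ ∑ i, (p i * |y i| - 2 * p i ^ 2) := by
        rw [Finset.sum_sub_distrib, sub_le_sub_iff_right]
        calc c * ‖y‖ ≤ c * ∑ i, |y i| := by gcongr; exact EuclideanSpace.norm_le_sum_abs y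
          _ = ∑ i, c * |y i| := Finset.mul_sum _ _ _
          _ ≤ ∑ i, p i * |y i| := by gcongr with i; exact hcp i
    _ ≤ expPotential p y := Finset.sum_le_sum fun i _ => mul_abs_sub_le_exp_sub_mul (p i) (y i)

lemma continuous_expPotential (p : EuclideanSpace ℝ ι) : Continuous (expPotential p) := by
  unfold expPotential; fun_prop

lemma expPotential_add_inner_le (p y w : EuclideanSpace ℝ ι) :
    expPotential p y + ⟪expVec y - p, w⟫ ≤ expPotential p (y + w) := by
  simp only [expPotential, expVec, PiLp.inner_apply, RCLike.inner_apply, conj_trivial,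
    PiLp.sub_apply, PiLp.add_apply, ← Finset.sum_add_distrib]
  refine Finset.sum_le_sum fun i _ => ?_
  rw [exp_add]
  nlinarith [add_one_le_exp (w i), exp_pos (y i)]

lemma hasDerivAt_expPotential_add_smul (p y w : EuclideanSpace ℝ ι) :
    HasDerivAt (fun ε : ℝ => expPotential p (y + ε • w)) ⟪expVec y - p, w⟫ 0 := by
  simp only [expPotential, expVec, PiLp.inner_apply, RCLike.inner_apply, conj_trivial,
    PiLp.sub_apply, PiLp.add_apply, PiLp.smul_apply, smul_eq_mul]
  refine HasDerivAt.fun_sum fun i _ => ?_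
  have h : HasDerivAt (fun ε : ℝ => y i + ε * w i) (w i) 0 := by
    simpa using (hasDerivAt_mul_const (w i)).const_add (y i)
  refine (h.exp.fun_sub (h.const_mul (p i))).congr_deriv ?_
  rw [zero_mul, add_zero]; ring

variable (S : Submodule ℝ (EuclideanSpace ℝ ι)) (p : EuclideanSpace ℝ ι)

-- The logarithms of the positive points of `p + S`.
def birchSet : Set (EuclideanSpace ℝ ι) := {y | expVec y - p ∈ S}

lemma isClosed_birchSet : IsClosed (birchSet S p) := by
  refine S.closed_of_finiteDimensional.preimage ?_
  unfold expVec; fun_prop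

noncomputable def birchMap (y : birchSet S p) : S := S.orthogonalProjectionOnto y

variable {S p}

lemma sub_mul_exp_sub_exp_pos {a b : ℝ} (h : a ≠ b) : 0 < (a - b) * (exp a - exp b) := by
  rcases h.lt_or_gt with h | h
  · exact mul_pos_of_neg_of_neg (sub_neg.2 h) (sub_neg.2 (exp_lt_exp.2 h))
  · exact mul_pos (sub_pos.2 h) (sub_pos.2 (exp_lt_exp.2 h))

lemma eq_of_mem_birchSet {y y' : EuclideanSpace ℝ ι} (hy : y ∈ birchSet S p)
    (hy' : y' ∈ birchSet S p) (h : y - y' ∈ Sᗮ) : y = y' := by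
  have hexp : expVec y - expVec y' ∈ S := by
    simpa using S.sub_mem hy hy'
  have hzero : ∑ i, (y i - y' i) * (exp (y i) - exp (y' i)) = 0 := by
    simpa [PiLp.inner_apply, expVec] using Submodule.inner_right_of_mem_orthogonal hexp h
  have hnonneg : ∀ i ∈ Finset.univ, 0 ≤ (y i - y' i) * (exp (y i) - exp (y' i)) := by
    intro i _
    by_cases hi : y i = y' i
    · simp [hi]
    · exact (sub_mul_exp_sub_exp_pos hi).le
  ext i
  by_contra hi
  have := (Finset.sum_eq_zero_iff_of_nonneg hnonneg).1 hzero i (Finset.mem_univ i)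
  exact (sub_mul_exp_sub_exp_pos hi).ne' this

lemma birchMap_injective : Function.Injective (birchMap S p) := by
  intro y y' h
  refine Subtype.ext (eq_of_mem_birchSet y.2 y'.2 ?_)
  rw [← S.orthogonalProjectionOnto_eq_zero_iff, map_sub]
  exact sub_eq_zero.2 h

lemma tendsto_expPotential_add_cocompact (hp : ∀ i, 0 < p i) (z : EuclideanSpace ℝ ι) :
    Tendsto (fun w : Sᗮ => expPotential p (z + w)) (cocompact Sᗮ) atTop := by
  obtain ⟨c, hc, C, hC⟩ := exists_mul_norm_sub_le_expPotential hp
  refine tendsto_atTop_mono (fun w : Sᗮ => ?_)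
    ((tendsto_norm_cocompact_atTop.const_mul_atTop hc).atTop_add
      (tendsto_const_nhds (x := -(c * ‖z‖ + C))))
  have h1 := hC (z + w)
  have h2 : ‖(w : EuclideanSpace ℝ ι)‖ ≤ ‖z + w‖ + ‖z‖ := by
    simpa using norm_sub_le (z + (w : EuclideanSpace ℝ ι)) z
  simp only [Submodule.coe_norm] at *
  nlinarith

lemma exists_sub_mem_orthogonal_mem_birchSet (hp : ∀ i, 0 < p i) (z : EuclideanSpace ℝ ι) :
    ∃ y, y - z ∈ Sᗮ ∧ y ∈ birchSet S p := by
  have hcont : Continuous fun w : Sᗮ => expPotential p (z + w) :=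
    (continuous_expPotential p).comp (continuous_const.add continuous_subtype_val)
  obtain ⟨w₀, hw₀⟩ := hcont.exists_forall_le (tendsto_expPotential_add_cocompact hp z)
  refine ⟨z + w₀, by simp, ?_⟩
  suffices h : expVec (z + (w₀ : EuclideanSpace ℝ ι)) - p ∈ Sᗮᗮ by
    rwa [S.orthogonal_orthogonal] at h
  rw [Submodule.mem_orthogonal']
  intro w hw
  have hmin : IsLocalMin (fun ε : ℝ => expPotential p (z + w₀ + ε • w)) 0 :=
    Filter.Eventually.of_forall fun ε => by
      simpa [add_assoc] using hw₀ (w₀ + ε • ⟨w, hw⟩)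
  exact hmin.hasDerivAt_eq_zero (hasDerivAt_expPotential_add_smul p _ w)

lemma birchMap_surjective (hp : ∀ i, 0 < p i) : Function.Surjective (birchMap S p) := by
  intro z
  obtain ⟨y, hyz, hy⟩ := exists_sub_mem_orthogonal_mem_birchSet (S := S) hp z
  refine ⟨⟨y, hy⟩, ?_⟩
  have := S.orthogonalProjectionOnto_apply_of_mem_orthogonal hyz
  rwa [map_sub, sub_eq_zero, Submodule.orthogonalProjectionOnto_mem_subspace_eq_self] at this

lemma expPotential_le_add_of_mem_birchSet {y w : EuclideanSpace ℝ ι} (hy : y ∈ birchSet S p)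
    (hw : w ∈ Sᗮ) : expPotential p y ≤ expPotential p (y + w) := by
  simpa [Submodule.inner_right_of_mem_orthogonal hy hw] using expPotential_add_inner_le p y w

lemma exists_norm_le_of_mem_birchSet (hp : ∀ i, 0 < p i) {Q : Set S} (hQ : IsCompact Q) :
    ∃ R, ∀ y ∈ birchSet S p, S.orthogonalProjectionOnto y ∈ Q → ‖y‖ ≤ R := by
  obtain ⟨c, hc, C, hC⟩ := exists_mul_norm_sub_le_expPotential hp
  obtain ⟨B, hB⟩ := hQ.bddAbove_image
    ((continuous_expPotential p).comp continuous_subtype_val).continuousOn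
  refine ⟨(B + C) / c, fun y hy hyQ => ?_⟩
  have hproj : expPotential p y ≤ expPotential p (S.orthogonalProjectionOnto y) := by
    simpa using expPotential_le_add_of_mem_birchSet hy
      (Sᗮ.neg_mem (S.sub_starProjection_mem_orthogonal y))
  have hbound := hB ⟨_, hyQ, rfl⟩
  rw [le_div_iff₀ hc]
  simp only [Function.comp_apply] at hbound
  linarith [hC y]

lemma isProperMap_birchMap (hp : ∀ i, 0 < p i) : IsProperMap (birchMap S p) := by
  rw [isProperMap_iff_isCompact_preimage]
  refine ⟨S.orthogonalProjectionOnto.continuous.comp continuous_subtype_val, fun Q hQ => ?_⟩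
  obtain ⟨R, hR⟩ := exists_norm_le_of_mem_birchSet hp hQ
  have hcompact : IsCompact (S.orthogonalProjectionOnto ⁻¹' Q ∩ Metric.closedBall 0 R) :=
    (isCompact_closedBall 0 R).inter_left
      (hQ.isClosed.preimage S.orthogonalProjectionOnto.continuous)
  convert (isClosed_birchSet S p).isClosedEmbedding_subtypeVal.isCompact_preimage hcompact using 1
  ext y
  simpa [birchMap] using fun hy => hR y y.2 hy

noncomputable def birchHomeomorph (hp : ∀ i, 0 < p i) : birchSet S p ≃ₜ S :=
  (Equiv.ofBijective _ ⟨birchMap_injective, birchMap_surjective hp⟩).toHomeomorphOfContinuousClosed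
    (isProperMap_birchMap hp).continuous (isProperMap_birchMap hp).isClosedMap

end Birch

section InnerProductSpace

variable {𝕜 V W : Type*} [RCLike 𝕜] [NormedAddCommGroup V] [InnerProductSpace 𝕜 V]
  [NormedAddCommGroup W] [InnerProductSpace 𝕜 W]

lemma eq_of_setOf_eq_add_eq {𝓘 K : Submodule 𝕜 W} (hK : K ≤ 𝓘) {F G : K → 𝓘ᗮ}
    (h : {w : W | ∃ z : K, w = z + F z} = {w : W | ∃ z : K, w = z + G z}) : F = G := by
  funext z
  obtain ⟨z', hz'⟩ : (z : W) + F z ∈ {w : W | ∃ z : K, w = z + G z} := h ▸ ⟨z, rfl⟩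
  have hzz' : (z : W) - z' = G z' - F z := by
    rw [sub_eq_sub_iff_add_eq_add, hz', add_comm]
  have hzero : (z : W) - z' = 0 :=
    Submodule.disjoint_def.1 𝓘.orthogonal_disjoint _ (𝓘.sub_mem (hK z.2) (hK z'.2))
      (hzz' ▸ 𝓘ᗮ.sub_mem (G z').2 (F z).2)
  obtain rfl : z = z' := Subtype.ext (sub_eq_zero.1 hzero)
  exact Subtype.ext (add_left_cancel hz')

lemma range_eq_setOf_eq_add {X : Type*} {𝓘 K : Submodule 𝕜 W} [𝓘.HasOrthogonalProjection]
    (f : X → W) (φ : X ≃ K) (hφ : ∀ x, (φ x : W) = 𝓘.starProjection (f x)) :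
    Set.range f =
      {w | ∃ z : K, w = (z : W) + (𝓘ᗮ.orthogonalProjectionOnto (f (φ.symm z)) : W)} := by
  have hdecomp : ∀ x, f x = φ x + 𝓘ᗮ.orthogonalProjectionOnto (f x) := fun x => by
    rw [hφ, ← Submodule.starProjection_apply,
      Submodule.starProjection_add_starProjection_orthogonal]
  ext w
  constructor
  · rintro ⟨x, rfl⟩
    exact ⟨φ x, by rw [Equiv.symm_apply_apply, ← hdecomp]⟩
  · rintro ⟨z, rfl⟩
    exact ⟨φ.symm z, (hdecomp _).trans (by rw [Equiv.apply_symm_apply])⟩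

lemma exists_linearEquiv_range_of_ker_eq_orthogonal
    (S : Submodule 𝕜 V) [S.HasOrthogonalProjection] (L : V →ₗ[𝕜] W)
    (hL : LinearMap.ker L = Sᗮ) :
    ∃ e : S ≃ₗ[𝕜] LinearMap.range L, ∀ v, (e (S.orthogonalProjectionOnto v) : W) = L v := by
  have hproj : ∀ v, L (S.orthogonalProjectionOnto v) = L v := fun v => by
    rw [← sub_eq_zero, ← map_sub, ← LinearMap.mem_ker, hL, ← neg_mem_iff, neg_sub]
    exact S.sub_starProjection_mem_orthogonal v
  have hinj : Function.Injective (L.rangeRestrict ∘ₗ S.subtype) := by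
    rw [← LinearMap.ker_eq_bot, LinearMap.ker_comp, LinearMap.ker_rangeRestrict, hL]
    exact Submodule.disjoint_iff_comap_eq_bot.1 S.orthogonal_disjoint
  have hsurj : Function.Surjective (L.rangeRestrict ∘ₗ S.subtype) := by
    rintro ⟨_, v, rfl⟩
    exact ⟨S.orthogonalProjectionOnto v, Subtype.ext (hproj v)⟩
  exact ⟨LinearEquiv.ofBijective _ ⟨hinj, hsurj⟩, hproj⟩

lemma ker_starProjection_comp_adjoint [FiniteDimensional 𝕜 V] [FiniteDimensional 𝕜 W]
    (𝓘 : Submodule 𝕜 W) (B : W →ₗ[𝕜] V) :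
    LinearMap.ker ((𝓘.subtype ∘ₗ 𝓘.orthogonalProjectionOnto.toLinearMap) ∘ₗ B.adjoint) =
      (𝓘.map B)ᗮ := by
  ext v
  simp only [LinearMap.mem_ker, LinearMap.comp_apply, Submodule.subtype_apply,
    ContinuousLinearMap.coe_coe, ZeroMemClass.coe_eq_zero,
    Submodule.orthogonalProjectionOnto_eq_zero_iff, Submodule.mem_orthogonal,
    LinearMap.adjoint_inner_right, Submodule.mem_map, forall_exists_index, and_imp,
    forall_apply_eq_imp_iff₂]

end InnerProductSpace

lemma mem_matRangeE {m k : ℕ} {A : Matrix (Fin m) (Fin k) ℝ} {v : EuclideanSpace ℝ (Fin m)} :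
    v ∈ matRangeE A ↔ ∃ u, A *ᵥ u = v.ofLp := Iff.rfl

lemma matRangeE_eq_range {m k : ℕ} (A : Matrix (Fin m) (Fin k) ℝ) :
    matRangeE A = LinearMap.range (toEuclideanLin A) := by
  ext v
  rw [mem_matRangeE, LinearMap.mem_range]
  constructor
  · rintro ⟨u, hu⟩
    exact ⟨WithLp.toLp 2 u, by rw [toLpLin_apply]; exact congrArg (WithLp.toLp 2) hu⟩
  · rintro ⟨u, rfl⟩
    exact ⟨u.ofLp, rfl⟩

lemma matRangeE_mul {m k d : ℕ} (Y : Matrix (Fin m) (Fin k) ℝ) (A : Matrix (Fin k) (Fin d) ℝ) :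
    matRangeE (Y * A) = (matRangeE A).map (toEuclideanLin Y) := by
  rw [matRangeE_eq_range, matRangeE_eq_range, ← LinearMap.range_comp, toLpLin_mul_same]

lemma toEuclideanLin_transpose {m k : ℕ} (A : Matrix (Fin m) (Fin k) ℝ) :
    toEuclideanLin Aᵀ = (toEuclideanLin A).adjoint := by
  rw [← toEuclideanLin_conjTranspose_eq_adjoint, conjTranspose_eq_transpose_of_trivial]

lemma setOf_mulVec_log_eq_range_birchSet {n m d : ℕ} (M : Matrix (Fin m) (Fin n) ℝ)
    (A : Matrix (Fin n) (Fin d) ℝ) (p : Fin n → ℝ) :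
    {w : EuclideanSpace ℝ (Fin m) | ∃ x ∈ {x : Fin n → ℝ | (∀ i, 0 < x i) ∧ ∃ u : Fin d → ℝ,
        x = p + A *ᵥ u}, w = (WithLp.linearEquiv 2 ℝ (Fin m → ℝ)).symm (M *ᵥ fun i => log (x i))} =
      Set.range fun y : birchSet (matRangeE A) (WithLp.toLp 2 p) => toEuclideanLin M y := by
  ext w
  constructor
  · rintro ⟨x, ⟨hx, u, rfl⟩, rfl⟩
    refine ⟨⟨WithLp.toLp 2 fun i => log ((p + A *ᵥ u) i), ⟨u, ?_⟩⟩, rfl⟩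
    ext i
    have hxi : 0 < p i + (A *ᵥ u) i := hx i
    simp [expVec, exp_log hxi]
  · rintro ⟨⟨y, u, hu⟩, rfl⟩
    refine ⟨(expVec y).ofLp, ⟨fun i => exp_pos (y i), u, ?_⟩, ?_⟩
    · ext i
      have := congrFun hu i
      simp [expVec] at this ⊢
      linarith
    · ext i
      simp [expVec, toLpLin_apply]

/-- Let `Y ∈ ℝ^{n×m}`, `I ∈ ℝ^{m×d}`, `𝓘 = ran I`, `K = Π_𝓘(ran Y^⊤)`, `p ∈ ℝⁿ₊`,
`P = (p + ran(YI)) ∩ ℝⁿ₊`.  Then there is a unique `F : K → 𝓘^⊥` with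
`Y^⊤ log P = {z + F(z) : z ∈ K}`; moreover any such `F` is continuous. -/
theorem stmt_15 (n m d : ℕ) (Y : Matrix (Fin n) (Fin m) ℝ)
    (Imat : Matrix (Fin m) (Fin d) ℝ) (p : Fin n → ℝ) (hp : ∀ i, 0 < p i) :
    letI 𝓘 : Submodule ℝ (EuclideanSpace ℝ (Fin m)) := matRangeE Imat
    letI K : Submodule ℝ (EuclideanSpace ℝ (Fin m)) :=
      Submodule.map (𝓘.subtype.comp 𝓘.orthogonalProjectionOnto.toLinearMap) (matRangeE Yᵀ)
    letI P : Set (Fin n → ℝ) :=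
      {x | (∀ i, 0 < x i) ∧ ∃ u : Fin d → ℝ, x = p + (Y * Imat).mulVec u}
    letI prop : (K → 𝓘ᗮ) → Prop := fun F =>
      {w : EuclideanSpace ℝ (Fin m) | ∃ x ∈ P,
          w = (WithLp.linearEquiv 2 ℝ (Fin m → ℝ)).symm
            (Yᵀ.mulVec (fun i => Real.log (x i)))} =
        {w : EuclideanSpace ℝ (Fin m) | ∃ z : K, w = (z : _) + (F z : _)}
    (∃! F : K → 𝓘ᗮ, prop F) ∧ (∀ F : K → 𝓘ᗮ, prop F → Continuous F) := by
  beta_reduce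
  set 𝓘 := matRangeE Imat
  set K := Submodule.map (𝓘.subtype.comp 𝓘.orthogonalProjectionOnto.toLinearMap) (matRangeE Yᵀ)
  have hp' : ∀ i, 0 < (WithLp.toLp 2 p : EuclideanSpace ℝ (Fin n)) i := hp
  obtain ⟨e, he⟩ := exists_linearEquiv_range_of_ker_eq_orthogonal (matRangeE (Y * Imat))
    ((𝓘.subtype ∘ₗ 𝓘.orthogonalProjectionOnto.toLinearMap) ∘ₗ toEuclideanLin Yᵀ) (by
      rw [toEuclideanLin_transpose, ker_starProjection_comp_adjoint, matRangeE_mul])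
  have hK : LinearMap.range
      ((𝓘.subtype ∘ₗ 𝓘.orthogonalProjectionOnto.toLinearMap) ∘ₗ toEuclideanLin Yᵀ) = K := by
    rw [LinearMap.range_comp, ← matRangeE_eq_range]
  have hK𝓘 : K ≤ 𝓘 := by
    rintro _ ⟨v, -, rfl⟩
    exact (𝓘.orthogonalProjectionOnto _).2
  let φ : birchSet (matRangeE (Y * Imat)) (WithLp.toLp 2 p) ≃ₜ K := (birchHomeomorph hp').trans
    (e.trans (LinearEquiv.ofEq _ _ hK)).toContinuousLinearEquiv.toHomeomorph
  have hφ : ∀ y, (φ y : EuclideanSpace ℝ (Fin m)) = 𝓘.starProjection (toEuclideanLin Yᵀ y) :=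
    fun y => he y
  set F₀ := fun z : K => 𝓘ᗮ.orthogonalProjectionOnto (toEuclideanLin Yᵀ (φ.symm z))
  have hF₀ := (setOf_mulVec_log_eq_range_birchSet Yᵀ (Y * Imat) p).trans
    (range_eq_setOf_eq_add _ φ.toEquiv hφ)
  have hcont : Continuous F₀ := 𝓘ᗮ.orthogonalProjectionOnto.continuous.comp
    ((toEuclideanLin Yᵀ).continuous_of_finiteDimensional.comp
      (continuous_subtype_val.comp φ.symm.continuous))
  exact ⟨⟨F₀, hF₀, fun F hF => eq_of_setOf_eq_add_eq hK𝓘 (hF.symm.trans hF₀)⟩,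
    fun F hF => eq_of_setOf_eq_add_eq hK𝓘 (hF.symm.trans hF₀) ▸ hcont⟩
end
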